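/- arXiv:2510.23457 — 3 statements merged into one kernel-verified Lean document; each statement's English description precedes it below -/
import Mathlib

section
/- Let q be a prime number, let G be a commutative group, and let g ∈ G have order q; for x ∈ ZMod q write g^x for g raised to the natural-number representative of x. Let k ≥ 1, let sk₀, h₁,…,h_k, r₁,…,r_k ∈ ZMod q, and define sk_ℓ = sk_{ℓ−1}·h_ℓ + r_ℓ for ℓ = 1,…,k. Set PK₀ = g^{sk₀} and Q_ℓ = g^{r_ℓ} for each ℓ. Then g^{sk_k} = (∏_{ℓ=1}^{k−1} Q_ℓ^{∏_{ω=ℓ+1}^{k} h_ω}) · Q_k · PK₀^{∏_{ℓ=1}^{k} h_ℓ}. -/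
/-!
Unrolling the recurrence gives, in `ZMod q`,
`sk_k = ∑_{ℓ ≤ k} r_ℓ ∏_{ω > ℓ} h_ω + sk_0 ∏_{ℓ ≤ k} h_ℓ`. Because `g` has order `q`, the map
`x ↦ g ^ x.val` sends sums to products and products to iterated powers, and the relation is the
image of this identity.
-/

open Finset

section PowVal

variable {n : ℕ} [NeZero n]

section Monoid

variable {G : Type*} [Monoid G] {g : G}

theorem pow_val_add_of_orderOf_eq (hg : orderOf g = n) (a b : ZMod n) :
    g ^ (a + b).val = g ^ a.val * g ^ b.val := by
  subst hg
  rw [ZMod.val_add, pow_mod_orderOf, pow_add]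

theorem pow_val_mul_of_orderOf_eq (hg : orderOf g = n) (a b : ZMod n) :
    g ^ (a * b).val = (g ^ a.val) ^ b.val := by
  subst hg
  rw [ZMod.val_mul, pow_mod_orderOf, pow_mul]

end Monoid

theorem pow_val_sum_of_orderOf_eq {G : Type*} [CommMonoid G] {g : G} (hg : orderOf g = n)
    {ι : Type*} (s : Finset ι) (a : ι → ZMod n) :
    g ^ (∑ i ∈ s, a i).val = ∏ i ∈ s, g ^ (a i).val := by
  classical
  induction s using Finset.induction with
  | empty => simp
  | insert i s hi ih =>
    rw [sum_insert hi, pow_val_add_of_orderOf_eq hg, ih, prod_insert hi]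

end PowVal

theorem eq_sum_mul_prod_add_mul_prod_of_rec {R : Type*} [CommSemiring R] {x h r : ℕ → R}
    (hrec : ∀ ℓ, x (ℓ + 1) = x ℓ * h (ℓ + 1) + r (ℓ + 1)) (k : ℕ) :
    x k = ∑ ℓ ∈ Icc 1 k, r ℓ * ∏ ω ∈ Icc (ℓ + 1) k, h ω + x 0 * ∏ ℓ ∈ Icc 1 k, h ℓ := by
  induction k with
  | zero => simp
  | succ k ih =>
    have hprod : ∀ ℓ ∈ Icc 1 k,
        r ℓ * ∏ ω ∈ Icc (ℓ + 1) (k + 1), h ω = r ℓ * (∏ ω ∈ Icc (ℓ + 1) k, h ω) * h (k + 1) :=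
      fun ℓ hℓ => by
        rw [prod_Icc_succ_top (Nat.succ_le_succ (mem_Icc.1 hℓ).2), mul_assoc]
    rw [hrec, ih, sum_Icc_succ_top (Nat.le_add_left 1 k), sum_congr rfl hprod, ← sum_mul,
      prod_Icc_succ_top (a := 1) (Nat.le_add_left 1 k), Icc_eq_empty_of_lt (Nat.lt_succ_self _),
      prod_empty]
    ring

/-- Key relation `g^{sk_k} = (∏_{ℓ=1}^{k-1} Q_ℓ^{∏_{ω=ℓ+1}^{k} h_ω}) · Q_k · PK₀^{∏_{ℓ=1}^{k} h_ℓ}`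
used in the correctness proof of BORG verification, where `g^x` for `x : ZMod q` denotes
`g ^ x.val` and `g` has order `q`. -/
theorem borg_hierarchical_public_key_relation
    (q : ℕ) (hq : q.Prime) (G : Type*) [CommGroup G] (g : G) (hg : orderOf g = q)
    (k : ℕ) (hk : 1 ≤ k) (sk h r : ℕ → ZMod q)
    (hrec : ∀ ℓ : ℕ, sk (ℓ + 1) = sk ℓ * h (ℓ + 1) + r (ℓ + 1)) :
    g ^ (sk k).val =
      (∏ ℓ ∈ Finset.Icc 1 (k - 1),
          (g ^ (r ℓ).val) ^ (∏ ω ∈ Finset.Icc (ℓ + 1) k, h ω).val) *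
        (g ^ (r k).val) *
        (g ^ (sk 0).val) ^ (∏ ℓ ∈ Finset.Icc 1 k, h ℓ).val := by
  have : NeZero q := ⟨hq.ne_zero⟩
  obtain ⟨n, rfl⟩ : ∃ n, k = n + 1 := ⟨k - 1, by omega⟩
  have hsk : sk (n + 1) = ∑ ℓ ∈ Icc 1 n, r ℓ * ∏ ω ∈ Icc (ℓ + 1) (n + 1), h ω + r (n + 1)
      + sk 0 * ∏ ℓ ∈ Icc 1 (n + 1), h ℓ := by
    rw [eq_sum_mul_prod_add_mul_prod_of_rec hrec, sum_Icc_succ_top (by omega),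
      Icc_eq_empty_of_lt (Nat.lt_succ_self (n + 1)), prod_empty, mul_one]
  simp only [Nat.add_sub_cancel, hsk, pow_val_add_of_orderOf_eq hg,
    pow_val_sum_of_orderOf_eq hg, pow_val_mul_of_orderOf_eq hg]
end

section
/- Let q be a prime number, let G be a commutative group, and let g ∈ G have order q; for x ∈ ZMod q write g^x for g raised to the natural-number representative of x. Let k ≥ 1, let sk₀, h₁,…,h_k, r₁,…,r_k ∈ ZMod q, define sk_ℓ = sk_{ℓ−1}·h_ℓ + r_ℓ for ℓ = 1,…,k, and set PK₀ = g^{sk₀} and Q_ℓ = g^{r_ℓ}. Let t, β, n be natural numbers with 0 < t ≤ β ≤ n < q, let S ⊆ {1,…,n} with |S| = β, and let f be a polynomial over ZMod q with degree strictly less than t and f(0) = sk_k. For i ∈ S define λ_i = ∏_{j ∈ S, j ≠ i} (j)·(j − i)⁻¹ in ZMod q. Let h ∈ ZMod q and for each i ∈ S let d_i, e_i, ρ_i ∈ ZMod q; define R_i = g^{d_i + e_i·ρ_i}, R = ∏_{i∈S} R_i, z_i = d_i + e_i·ρ_i + λ_i·f(i)·h, and z = Σ_{i∈S} z_i. Then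 the verification equation holds: g^z = R · ((∏_{ℓ=1}^{k−1} Q_ℓ^{∏_{ω=ℓ+1}^{k} h_ω}) · Q_k · PK₀^{∏_{ℓ=1}^{k} h_ℓ})^{h}. -/
/-!
Since `g` has order `q`, `x ↦ g ^ x.val` turns sums and products in `ZMod q` into products and
powers in `G`, so the verification equation reduces to an identity of exponents. By Lagrange
interpolation at `0`, the coefficients `λ_i` recombine the Shamir shares `f(i)` into
`f(0) = sk_k`, and unrolling the recursion `sk_ℓ = sk_{ℓ-1} h_ℓ + r_ℓ` writes `sk_k` as
`sk₀ ∏ h_ℓ + ∑ r_ℓ ∏_{ω > ℓ} h_ω`, which is exactly the exponent of the public-key expression.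
-/

open Finset Polynomial

section ZModPow

variable {M : Type*} {n : ℕ}

theorem pow_mod_of_orderOf_dvd [Monoid M] {g : M} (hg : orderOf g ∣ n) (a : ℕ) :
    g ^ (a % n) = g ^ a := by
  rw [← pow_mod_orderOf, Nat.mod_mod_of_dvd _ hg, pow_mod_orderOf]

theorem pow_zmod_val_mul [Monoid M] {g : M} (hg : orderOf g ∣ n) (a b : ZMod n) :
    g ^ (a * b).val = (g ^ a.val) ^ b.val := by
  rw [ZMod.val_mul, pow_mod_of_orderOf_dvd hg, pow_mul]

variable [NeZero n]

theorem pow_zmod_val_add [Monoid M] {g : M} (hg : orderOf g ∣ n) (a b : ZMod n) :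
    g ^ (a + b).val = g ^ a.val * g ^ b.val := by
  rw [ZMod.val_add, pow_mod_of_orderOf_dvd hg, pow_add]

theorem pow_zmod_val_sum [CommMonoid M] {g : M} (hg : orderOf g ∣ n) {ι : Type*}
    (s : Finset ι) (u : ι → ZMod n) : g ^ (∑ i ∈ s, u i).val = ∏ i ∈ s, g ^ (u i).val := by
  induction s using Finset.cons_induction with
  | empty => simp
  | cons a s ha ih => rw [sum_cons, prod_cons, pow_zmod_val_add hg, ih]

end ZModPow

namespace Lagrange

variable {F ι : Type*} [Field F] [DecidableEq ι] {s : Finset ι} {v : ι → F}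

theorem eval_zero_basis (i : ι) :
    (Lagrange.basis s v i).eval 0 = ∏ j ∈ s.erase i, v j * (v j - v i)⁻¹ := by
  rw [Lagrange.basis, eval_prod]
  refine prod_congr rfl fun j _ => ?_
  simp only [basisDivisor, eval_mul, eval_C, eval_sub, eval_X, zero_sub, ← neg_sub (v j) (v i),
    inv_neg]
  ring

theorem eval_zero_eq_sum_mul_eval (hvs : Set.InjOn v s) {f : F[X]} (hf : f.degree < #s) :
    f.eval 0 = ∑ i ∈ s, (∏ j ∈ s.erase i, v j * (v j - v i)⁻¹) * f.eval (v i) := by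
  conv_lhs => rw [eq_interpolate hvs hf, interpolate_apply, eval_finsetSum]
  refine sum_congr rfl fun i _ => ?_
  rw [eval_mul, eval_C, eval_zero_basis, mul_comm]

end Lagrange

theorem eq_mul_prod_add_sum_of_succ_eq_mul_add {R : Type*} [CommSemiring R] {x a b : ℕ → R}
    (hx : ∀ m, x (m + 1) = x m * a (m + 1) + b (m + 1)) (m : ℕ) :
    x m = x 0 * ∏ ℓ ∈ Icc 1 m, a ℓ + ∑ ℓ ∈ Icc 1 m, b ℓ * ∏ ω ∈ Icc (ℓ + 1) m, a ω := by
  induction m with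
  | zero => simp
  | succ m ih =>
    have hsplit : ∀ ℓ ∈ Icc 1 m,
        b ℓ * ∏ ω ∈ Icc (ℓ + 1) (m + 1), a ω = b ℓ * (∏ ω ∈ Icc (ℓ + 1) m, a ω) * a (m + 1) :=
      fun ℓ hℓ => by rw [prod_Icc_succ_top (by grind), mul_assoc]
    rw [hx, ih, prod_Icc_succ_top (by omega : 1 ≤ m + 1), sum_Icc_succ_top (by omega : 1 ≤ m + 1),
      Icc_eq_empty_of_lt (lt_add_one (m + 1)), prod_empty, sum_congr rfl hsplit, ← sum_mul]
    ring

theorem borg_verification_correctness_general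
    (q : ℕ) (hq : q.Prime) (G : Type*) [CommGroup G] (g : G) (hg : orderOf g = q)
    (k : ℕ) (hk : 1 ≤ k) (sk hh r : ℕ → ZMod q)
    (hrec : ∀ ℓ : ℕ, sk (ℓ + 1) = sk ℓ * hh (ℓ + 1) + r (ℓ + 1))
    (t β n : ℕ) (htβ : t ≤ β) (hnq : n < q)
    (S : Finset ℕ) (hS : S ⊆ Finset.Icc 1 n) (hcard : S.card = β)
    (f : Polynomial (ZMod q)) (hfdeg : f.degree < t) (hf0 : f.eval 0 = sk k)
    (lam : ℕ → ZMod q)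
    (hlam : ∀ i ∈ S, lam i =
      ∏ j ∈ S.erase i, (j : ZMod q) * ((j : ZMod q) - (i : ZMod q))⁻¹)
    (c : ZMod q) (d e ρ : ℕ → ZMod q)
    (z : ZMod q)
    (hz : z = ∑ i ∈ S, (d i + e i * ρ i + lam i * f.eval (i : ZMod q) * c)) :
    g ^ z.val =
      (∏ i ∈ S, g ^ (d i + e i * ρ i).val) *
        ((∏ ℓ ∈ Finset.Icc 1 (k - 1),
              (g ^ (r ℓ).val) ^ (∏ ω ∈ Finset.Icc (ℓ + 1) k, hh ω).val) *
            (g ^ (r k).val) *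
            (g ^ (sk 0).val) ^ (∏ ℓ ∈ Finset.Icc 1 k, hh ℓ).val) ^ c.val := by
  have : Fact q.Prime := ⟨hq⟩
  have hgq : orderOf g ∣ q := hg.dvd
  have hinj : Set.InjOn (fun i : ℕ => (i : ZMod q)) S := fun i hi j hj hij =>
    ((ZMod.natCast_eq_natCast_iff _ _ _).1 hij).eq_of_lt_of_lt (by grind) (by grind)
  have hshares : ∑ i ∈ S, lam i * f.eval (i : ZMod q) = sk k := by
    rw [← hf0, Lagrange.eval_zero_eq_sum_mul_eval hinj (hfdeg.trans_le (by exact_mod_cast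
      hcard ▸ htβ))]
    exact sum_congr rfl fun i hi => by rw [hlam i hi]
  have hkey : sk k = ∑ ℓ ∈ Icc 1 (k - 1), r ℓ * ∏ ω ∈ Icc (ℓ + 1) k, hh ω + r k +
      sk 0 * ∏ ℓ ∈ Icc 1 k, hh ℓ := by
    obtain ⟨k, rfl⟩ := Nat.exists_eq_add_of_le' hk
    rw [eq_mul_prod_add_sum_of_succ_eq_mul_add hrec, sum_Icc_succ_top (by omega : 1 ≤ k + 1),
      Icc_eq_empty_of_lt (lt_add_one (k + 1)), prod_empty, mul_one, Nat.add_sub_cancel]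
    ring
  rw [hz, sum_add_distrib, ← sum_mul, hshares, hkey, pow_zmod_val_add hgq, pow_zmod_val_sum hgq,
    pow_zmod_val_mul hgq, pow_zmod_val_add hgq, pow_zmod_val_add hgq, pow_zmod_val_sum hgq]
  simp only [pow_zmod_val_mul hgq]

/-- Correctness of BORG signature verification: an honestly generated threshold signature
`(R, z)`, produced by a set `S` of `β` participants (with `t ≤ β ≤ n < q`) holding Shamir
shares `f(i)` of the hierarchical level-`k` secret key `sk k`, satisfies the verification
equation `g^z = R · ((∏_{ℓ=1}^{k−1} Q_ℓ^{∏_{ω=ℓ+1}^{k} hh_ω}) · Q_k · PK₀^{∏_{ℓ=1}^{k} hh_ℓ})^c`.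
Here `g` has order `q` and exponentiation by `x : ZMod q` means `g ^ x.val`. -/
theorem borg_verification_correctness
    (q : ℕ) (hq : q.Prime) (G : Type*) [CommGroup G] (g : G) (hg : orderOf g = q)
    (k : ℕ) (hk : 1 ≤ k) (sk hh r : ℕ → ZMod q)
    (hrec : ∀ ℓ : ℕ, sk (ℓ + 1) = sk ℓ * hh (ℓ + 1) + r (ℓ + 1))
    (t β n : ℕ) (ht : 0 < t) (htβ : t ≤ β) (hβn : β ≤ n) (hnq : n < q)
    (S : Finset ℕ) (hS : S ⊆ Finset.Icc 1 n) (hcard : S.card = β)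
    (f : Polynomial (ZMod q)) (hfdeg : f.degree < t) (hf0 : f.eval 0 = sk k)
    (lam : ℕ → ZMod q)
    (hlam : ∀ i ∈ S, lam i =
      ∏ j ∈ S.erase i, (j : ZMod q) * ((j : ZMod q) - (i : ZMod q))⁻¹)
    (c : ZMod q) (d e ρ : ℕ → ZMod q)
    (z : ZMod q)
    (hz : z = ∑ i ∈ S, (d i + e i * ρ i + lam i * f.eval (i : ZMod q) * c)) :
    g ^ z.val =
      (∏ i ∈ S, g ^ (d i + e i * ρ i).val) *
        ((∏ ℓ ∈ Finset.Icc 1 (k - 1),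
              (g ^ (r ℓ).val) ^ (∏ ω ∈ Finset.Icc (ℓ + 1) k, hh ω).val) *
            (g ^ (r k).val) *
            (g ^ (sk 0).val) ^ (∏ ℓ ∈ Finset.Icc 1 k, hh ℓ).val) ^ c.val :=
  borg_verification_correctness_general q hq G g hg k hk sk hh r hrec t β n htβ hnq S hS hcard f
    hfdeg hf0 lam hlam c d e ρ z hz
end

section
/- Let q be a prime number, let G be a commutative group, and let g ∈ G have order q; for x ∈ ZMod q write g^x for g raised to the natural-number representative of x. Let s, h, r ∈ ZMod q and set sk = s·h + r. Let t ≥ 1 and let λ_i, a_i ∈ ZMod q for i = 1,…,t satisfy Σ_{i=1}^{t} λ_i·a_i = sk. Set PK_i = g^{a_i} and Q = g^{r}. Then ∏_{i=1}^{t} PK_i^{λ_i} = g^{h·s} · Q. -/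
/-!
Exponentiation by `x.val` only depends on `x.val` modulo the order of `g`, so every exponent may be
replaced by any natural number with the same image in `ZMod q`. Both sides of the check are then `g`
raised to a natural number whose image in `ZMod q` is `s * h + r`.
-/

theorem pow_eq_pow_of_modEq_orderOf {M : Type*} [Monoid M] {x : M} {m k : ℕ}
    (h : m ≡ k [MOD orderOf x]) : x ^ m = x ^ k := by
  rw [← pow_mod_orderOf x m, ← pow_mod_orderOf x k]
  exact congrArg (x ^ ·) h

theorem pow_val_eq_pow_of_natCast_eq {M : Type*} [Monoid M] {n : ℕ} [NeZero n] {x : M}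
    (hx : orderOf x ∣ n) {a : ZMod n} {k : ℕ} (hk : (k : ZMod n) = a) : x ^ a.val = x ^ k :=
  pow_eq_pow_of_modEq_orderOf <|
    ((ZMod.natCast_eq_natCast_iff _ _ _).mp (by rw [ZMod.natCast_zmod_val, hk])).of_dvd hx

theorem borg_pof_key_check_completeness_general
    (q : ℕ) (hq : q.Prime) (G : Type*) [CommGroup G] (g : G) (hg : orderOf g = q)
    (s h r : ZMod q) (t : ℕ) (lam a : ℕ → ZMod q)
    (hrecon : ∑ i ∈ Finset.Icc 1 t, lam i * a i = s * h + r) :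
    ∏ i ∈ Finset.Icc 1 t, (g ^ (a i).val) ^ (lam i).val =
      g ^ (h * s).val * g ^ r.val := by
  have : NeZero q := ⟨hq.ne_zero⟩
  have hdvd : orderOf g ∣ q := hg.dvd
  calc ∏ i ∈ Finset.Icc 1 t, (g ^ (a i).val) ^ (lam i).val
      = g ^ ∑ i ∈ Finset.Icc 1 t, (a i).val * (lam i).val := by
        simp only [← pow_mul, Finset.prod_pow_eq_pow_sum]
    _ = g ^ (s * h + r).val := by
        refine (pow_val_eq_pow_of_natCast_eq hdvd ?_).symm
        push_cast [ZMod.natCast_zmod_val]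
        rw [← hrecon]
        exact Finset.sum_congr rfl fun i _ => mul_comm _ _
    _ = g ^ ((h * s).val + r.val) :=
        pow_val_eq_pow_of_natCast_eq hdvd (by push_cast [ZMod.natCast_zmod_val]; ring)
    _ = g ^ (h * s).val * g ^ r.val := pow_add _ _ _

/-- Completeness of the key check in BORG.PoFVerify: if `sk = s·h + r` and the shares
`a_i` reconstruct `sk` via Lagrange coefficients `λ_i` (i.e. `Σ λ_i·a_i = sk`), then
with `PK_i = g^{a_i}` and `Q = g^{r}` one has `∏ PK_i^{λ_i} = g^{h·s} · Q`.
Exponentiation by `x : ZMod q` means raising to `x.val`, and `g` has order `q`. -/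
theorem borg_pof_key_check_completeness
    (q : ℕ) (hq : q.Prime) (G : Type*) [CommGroup G] (g : G) (hg : orderOf g = q)
    (s h r : ZMod q) (t : ℕ) (ht : 1 ≤ t) (lam a : ℕ → ZMod q)
    (hrecon : ∑ i ∈ Finset.Icc 1 t, lam i * a i = s * h + r) :
    ∏ i ∈ Finset.Icc 1 t, (g ^ (a i).val) ^ (lam i).val =
      g ^ (h * s).val * g ^ r.val :=
  borg_pof_key_check_completeness_general q hq G g hg s h r t lam a hrecon
end
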